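/- In the multiple-item additive setting with split budgets B_{ij} = B_i·v_{ij}/Σ_{j'} v_{ij'}, the optimal revenue OPT_bar of the sub-budget-constrained problem (where agent i may spend at most B_{ij} on item j) satisfies OPT_bar ≥ OPT/(2√n + 3), where OPT is the optimal revenue of the original problem with overall budgets B_i. -/

import Mathlib

/-!
With `c i = B i / Σⱼ w i j`, the split budgets are `B i j = c i * w i j`, so the sub-budget
constraint says `x i j ≤ c i`, and any budget-feasible allocation earns at most `c i * Σⱼ w i j`
from agent `i`. Fix `t = √n + 1`. An agent with `t * c i ≥ 1` loses at most a factor `t` when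
its allocation is truncated at `c i`, since `x i j ≤ 1 ≤ t * c i`. Every other agent can instead
receive the fraction `c i / t` of every item: these fractions sum to at most `n / t² ≤ 1` per
item, and they recover a `1 / t` share of the bound `c i * Σⱼ w i j`. Both allocations respect
the sub-budgets, hence `OPT ≤ 2 t · OPT_bar ≤ (2√n + 3) · OPT_bar`.
-/

open Finset

namespace SplitBudget

variable {ι κ : Type*}

section SplitRate

variable [Fintype κ]

noncomputable def splitRate (w : ι → κ → ℝ) (B : ι → ℝ) (i : ι) : ℝ := B i / ∑ j, w i j

variable {w : ι → κ → ℝ} {B : ι → ℝ} {i : ι}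

theorem splitRate_nonneg (hw : ∀ j, 0 ≤ w i j) (hB : 0 ≤ B i) : 0 ≤ splitRate w B i :=
  div_nonneg hB (sum_nonneg fun j _ => hw j)

theorem splitRate_mul_sum_le (hw : ∀ j, 0 ≤ w i j) (hB : 0 ≤ B i) :
    splitRate w B i * ∑ j, w i j ≤ B i := by
  rcases (sum_nonneg fun j _ => hw j).eq_or_lt with h | h
  · rwa [← h, mul_zero]
  · exact (div_mul_cancel₀ _ h.ne').le

theorem sum_mul_le_splitRate_mul_sum {a : κ → ℝ} (hw : ∀ j, 0 ≤ w i j)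
    (hB : ∑ j, a j * w i j ≤ B i) : ∑ j, a j * w i j ≤ splitRate w B i * ∑ j, w i j := by
  rcases (sum_nonneg fun j _ => hw j).eq_or_lt with h | h
  · have hw0 : ∀ j, w i j = 0 := fun j =>
      (sum_eq_zero_iff_of_nonneg fun j _ => hw j).mp h.symm j (mem_univ j)
    simp [hw0]
  · rwa [splitRate, div_mul_cancel₀ _ h.ne']

theorem mul_div_sum_eq_splitRate_mul {v : ι → κ → ℝ} {τ : ι → ℝ} (hτ : τ i ≠ 0)
    (hw : ∀ j, w i j = v i j / τ i) (j : κ) :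
    B i * v i j / ∑ j', v i j' = splitRate w B i * w i j := by
  have hv : ∀ j, v i j = τ i * w i j := fun j => by rw [hw, mul_div_cancel₀ _ hτ]
  simp only [hv, ← mul_sum, splitRate]
  rw [mul_left_comm, mul_div_mul_left _ _ hτ, mul_div_right_comm]

end SplitRate

section Threshold

variable {c : ι → ℝ} {x : ι → κ → ℝ} {t : ℝ}

noncomputable def richPart (c : ι → ℝ) (t : ℝ) (x : ι → κ → ℝ) : ι → κ → ℝ :=
  fun i j => if 1 ≤ t * c i then min (x i j) (c i) else 0

noncomputable def poorPart (c : ι → ℝ) (t : ℝ) : ι → κ → ℝ :=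
  fun i _ => if 1 ≤ t * c i then 0 else c i / t

theorem richPart_nonneg (hc : ∀ i, 0 ≤ c i) (hx : ∀ i j, 0 ≤ x i j) (i : ι) (j : κ) :
    0 ≤ richPart c t x i j := by
  unfold richPart; split_ifs
  exacts [le_min (hx i j) (hc i), le_rfl]

theorem richPart_le (hx : ∀ i j, 0 ≤ x i j) (i : ι) (j : κ) : richPart c t x i j ≤ x i j := by
  unfold richPart; split_ifs
  exacts [min_le_left _ _, hx i j]

theorem poorPart_le_inv_sq (ht : 0 < t) (i : ι) (j : κ) :
    poorPart c t i j ≤ 1 / t ^ 2 := by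
  unfold poorPart; split_ifs with h
  · positivity
  · rw [div_le_div_iff₀ ht (by positivity)]
    nlinarith

theorem le_mul_min_of_one_le_mul {a b : ℝ} (ha : 0 ≤ a) (ha1 : a ≤ 1) (ht : 1 ≤ t)
    (hb : 1 ≤ t * b) : a ≤ t * min a b := by
  rcases min_choice a b with h | h <;> rw [h] <;> nlinarith

end Threshold

variable [Fintype ι] [Fintype κ]

def IsFeasible (w : ι → κ → ℝ) (B : ι → ℝ) (x : ι → κ → ℝ) : Prop :=
  (∀ i j, 0 ≤ x i j) ∧ (∀ j, ∑ i, x i j ≤ 1) ∧ ∀ i, ∑ j, x i j * w i j ≤ B i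

def IsCapFeasible (w : ι → κ → ℝ) (B : ι → ℝ) (cap : ι → κ → ℝ) (x : ι → κ → ℝ) : Prop :=
  IsFeasible w B x ∧ ∀ i j, x i j * w i j ≤ cap i j

def revenue (w x : ι → κ → ℝ) : ℝ := ∑ i, ∑ j, x i j * w i j

noncomputable def optRevenue (w : ι → κ → ℝ) (B : ι → ℝ) : ℝ :=
  sSup {r | ∃ x, IsFeasible w B x ∧ r = revenue w x}

noncomputable def optCapRevenue (w : ι → κ → ℝ) (B : ι → ℝ) (cap : ι → κ → ℝ) : ℝ :=
  sSup {r | ∃ x, IsCapFeasible w B cap x ∧ r = revenue w x}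

section Optimum

variable {w : ι → κ → ℝ} {B : ι → ℝ} {cap x : ι → κ → ℝ}

theorem le_optCapRevenue (hx : IsCapFeasible w B cap x) :
    revenue w x ≤ optCapRevenue w B cap := by
  refine le_csSup ⟨∑ i, B i, ?_⟩ ⟨x, hx, rfl⟩
  rintro _ ⟨y, hy, rfl⟩
  exact sum_le_sum fun i _ => hy.1.2.2 i

theorem optCapRevenue_nonneg (hB : ∀ i, 0 ≤ B i) (hcap : ∀ i j, 0 ≤ cap i j) :
    0 ≤ optCapRevenue w B cap := by
  have hzero : IsCapFeasible w B cap 0 :=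
    ⟨⟨fun _ _ => le_rfl, fun _ => by simp, fun i => by simpa using hB i⟩,
      fun i j => by simpa using hcap i j⟩
  simpa [revenue] using le_optCapRevenue hzero

theorem optRevenue_le {b : ℝ} (h : ∀ x, IsFeasible w B x → revenue w x ≤ b) (hb : 0 ≤ b) :
    optRevenue w B ≤ b :=
  Real.sSup_le (by rintro _ ⟨x, hx, rfl⟩; exact h x hx) hb

end Optimum

section Feasibility

variable {w : ι → κ → ℝ} {B c : ι → ℝ} {x : ι → κ → ℝ} {t : ℝ}

theorem isCapFeasible_richPart (hw : ∀ i j, 0 ≤ w i j) (hc : ∀ i, 0 ≤ c i)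
    (hx : IsFeasible w B x) : IsCapFeasible w B (fun i j => c i * w i j) (richPart c t x) := by
  obtain ⟨hx0, hsupply, hbudget⟩ := hx
  have hle := richPart_le (c := c) (t := t) hx0
  refine ⟨⟨richPart_nonneg hc hx0, fun j => ?_, fun i => ?_⟩, fun i j => ?_⟩
  · exact (sum_le_sum fun i _ => hle i j).trans (hsupply j)
  · exact (sum_le_sum fun j _ => mul_le_mul_of_nonneg_right (hle i j) (hw i j)).trans
      (hbudget i)
  · refine mul_le_mul_of_nonneg_right ?_ (hw i j)
    unfold richPart; split_ifs
    exacts [min_le_right _ _, hc i]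

theorem isCapFeasible_poorPart (hw : ∀ i j, 0 ≤ w i j) (hc : ∀ i, 0 ≤ c i)
    (hcB : ∀ i, c i * ∑ j, w i j ≤ B i) (ht : 1 ≤ t) (hcard : (Fintype.card ι : ℝ) ≤ t ^ 2) :
    IsCapFeasible w B (fun i j => c i * w i j) (poorPart c t) := by
  have ht0 : 0 < t := one_pos.trans_le ht
  have hshrink : ∀ i, c i / t ≤ c i := fun i => div_le_self (hc i) ht
  have hB : ∀ i, 0 ≤ B i := fun i =>
    (mul_nonneg (hc i) (sum_nonneg fun j _ => hw i j)).trans (hcB i)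
  refine ⟨⟨fun i j => ?_, fun j => ?_, fun i => ?_⟩, fun i j => ?_⟩
  · unfold poorPart; split_ifs
    exacts [le_rfl, div_nonneg (hc i) ht0.le]
  · calc ∑ i, poorPart c t i j ≤ ∑ _i : ι, 1 / t ^ 2 :=
          sum_le_sum fun i _ => poorPart_le_inv_sq ht0 i j
      _ = Fintype.card ι / t ^ 2 := by simp [div_eq_mul_inv]
      _ ≤ 1 := div_le_one_of_le₀ hcard (by positivity)
  · unfold poorPart; split_ifs
    · simpa using hB i
    · rw [← mul_sum]
      exact (mul_le_mul_of_nonneg_right (hshrink i) (sum_nonneg fun j _ => hw i j)).trans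
        (hcB i)
  · refine mul_le_mul_of_nonneg_right ?_ (hw i j)
    unfold poorPart; split_ifs
    exacts [hc i, hshrink i]

theorem sum_mul_le_mul_add (hw : ∀ i j, 0 ≤ w i j) (ht : 1 ≤ t)
    (hx : IsFeasible w B x) (hxc : ∀ i, ∑ j, x i j * w i j ≤ c i * ∑ j, w i j) (i : ι) :
    ∑ j, x i j * w i j ≤
      t * (∑ j, richPart c t x i j * w i j + ∑ j, poorPart c t i j * w i j) := by
  obtain ⟨hx0, hsupply, -⟩ := hx
  have hx1 : ∀ j, x i j ≤ 1 := fun j =>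
    (single_le_sum (fun i' _ => hx0 i' j) (mem_univ i)).trans (hsupply j)
  by_cases hrich : 1 ≤ t * c i
  · simp only [richPart, poorPart, hrich, if_true, zero_mul, sum_const_zero, add_zero, mul_sum]
    refine sum_le_sum fun j _ => ?_
    rw [← mul_assoc]
    exact mul_le_mul_of_nonneg_right
      (le_mul_min_of_one_le_mul (hx0 i j) (hx1 j) ht hrich) (hw i j)
  · have ht0 : t ≠ 0 := (one_pos.trans_le ht).ne'
    simp only [richPart, poorPart, hrich, if_false, zero_mul, sum_const_zero, zero_add,
      ← mul_sum, ← mul_assoc, mul_div_cancel₀ _ ht0]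
    exact hxc i

theorem revenue_le_mul_add (hw : ∀ i j, 0 ≤ w i j) (ht : 1 ≤ t)
    (hx : IsFeasible w B x) (hxc : ∀ i, ∑ j, x i j * w i j ≤ c i * ∑ j, w i j) :
    revenue w x ≤ t * (revenue w (richPart c t x) + revenue w (poorPart c t)) := by
  rw [revenue, revenue, revenue, ← sum_add_distrib, mul_sum]
  exact sum_le_sum fun i _ => sum_mul_le_mul_add hw ht hx hxc i

end Feasibility

theorem optRevenue_le_two_mul_optCapRevenue {w : ι → κ → ℝ} {B : ι → ℝ} {t : ℝ}
    (hw : ∀ i j, 0 ≤ w i j) (hB : ∀ i, 0 ≤ B i) (ht : 1 ≤ t)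
    (hcard : (Fintype.card ι : ℝ) ≤ t ^ 2) :
    optRevenue w B ≤ 2 * t * optCapRevenue w B (fun i j => splitRate w B i * w i j) := by
  have hc : ∀ i, 0 ≤ splitRate w B i := fun i => splitRate_nonneg (hw i) (hB i)
  have hcB : ∀ i, splitRate w B i * ∑ j, w i j ≤ B i := fun i =>
    splitRate_mul_sum_le (hw i) (hB i)
  have hopt := optCapRevenue_nonneg (w := w) hB fun i j => mul_nonneg (hc i) (hw i j)
  refine optRevenue_le (fun x hx => ?_) (by positivity)
  have hxc : ∀ i, ∑ j, x i j * w i j ≤ splitRate w B i * ∑ j, w i j := fun i =>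
    sum_mul_le_splitRate_mul_sum (hw i) (hx.2.2 i)
  calc revenue w x
      ≤ t * (revenue w (richPart _ t x) + revenue w (poorPart _ t)) :=
        revenue_le_mul_add hw ht hx hxc
    _ ≤ t * (optCapRevenue w B _ + optCapRevenue w B _) := by
        gcongr
        exacts [le_optCapRevenue (isCapFeasible_richPart hw hc hx),
          le_optCapRevenue (isCapFeasible_poorPart hw hc hcB ht hcard)]
    _ = 2 * t * optCapRevenue w B _ := by ring

end SplitBudget

open SplitBudget in
/-- Splitting budgets proportionally to values, the optimal revenue of the
sub-budget-constrained problem (agent `i` may spend at most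
`B i * v i j / Σ_{j'} v i j'` on item `j`) is at least a `1/(2√n + 3)` fraction of the
optimal revenue of the original problem with overall budgets `B i`. -/
theorem stmt_14 (n m : ℕ) (v : Fin n → Fin m → ℝ) (B τ : Fin n → ℝ)
    (hv : ∀ i j, 0 ≤ v i j) (hB : ∀ i, 0 < B i) (hτ : ∀ i, 0 < τ i)
    (w : Fin n → Fin m → ℝ) (hw : ∀ i j, w i j = v i j / τ i)
    (Bij : Fin n → Fin m → ℝ)
    (hBij : ∀ i j, Bij i j = B i * v i j / ∑ j', v i j') :
    sSup {t : ℝ | ∃ x : Fin n → Fin m → ℝ,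
        (∀ i j, 0 ≤ x i j) ∧ (∀ j, ∑ i, x i j ≤ 1) ∧
        (∀ i, ∑ j, x i j * w i j ≤ B i) ∧
        t = ∑ i, ∑ j, x i j * w i j}
      / (2 * Real.sqrt n + 3)
    ≤ sSup {t : ℝ | ∃ x : Fin n → Fin m → ℝ,
        (∀ i j, 0 ≤ x i j) ∧ (∀ j, ∑ i, x i j ≤ 1) ∧
        (∀ i, ∑ j, x i j * w i j ≤ B i) ∧
        (∀ i j, x i j * w i j ≤ Bij i j) ∧
        t = ∑ i, ∑ j, x i j * w i j} := by
  have hw0 : ∀ i j, 0 ≤ w i j := fun i j => by rw [hw]; exact div_nonneg (hv i j) (hτ i).le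
  obtain rfl : Bij = fun i j => splitRate w B i * w i j := funext₂ fun i j => by
    rw [hBij, mul_div_sum_eq_splitRate_mul (hτ i).ne' (hw i)]
  have hbound := optRevenue_le_two_mul_optCapRevenue hw0 (fun i => (hB i).le)
    (le_add_of_nonneg_left (Real.sqrt_nonneg n))
    (by
      rw [Fintype.card_fin, add_sq, Real.sq_sqrt n.cast_nonneg]
      linarith [Real.sqrt_nonneg n])
  have hopt := optCapRevenue_nonneg (w := w) (fun i => (hB i).le)
    fun i j => mul_nonneg (splitRate_nonneg (hw0 i) (hB i).le) (hw0 i j)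
  simp only [optRevenue, optCapRevenue, IsCapFeasible, IsFeasible, revenue, and_assoc]
    at hbound hopt ⊢
  rw [div_le_iff₀ (by positivity), mul_comm]
  exact hbound.trans (mul_le_mul_of_nonneg_right (by linarith) hopt)
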